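/- arXiv:2412.13248 — 6 statements merged into one kernel-verified Lean document; each statement's English description precedes it below -/
import Mathlib

section
/- Let G = (V, E) be a graph, α ∈ (0, 1], and L a natural number. Suppose A ⊆ V satisfies that every connected subset S ⊆ V with |A ∩ S| ≥ α·|S| has |S| ≤ L, and B ⊆ V satisfies |B| ≤ L·(1 − α). Then every connected subset of A ∪ B has size at most L. -/
theorem Finset.card_le_card_inter_add_card_of_subset_union {V : Type*} [DecidableEq V]
    {S A B : Finset V} (hS : S ⊆ A ∪ B) : S.card ≤ (A ∩ S).card + B.card := by
  have hdiff : S \ A ⊆ B := sdiff_le_iff.2 hS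
  calc S.card = (S ∩ A).card + (S \ A).card := (Finset.card_inter_add_card_sdiff S A).symm
    _ ≤ (A ∩ S).card + B.card := by
      rw [Finset.inter_comm]
      exact Nat.add_le_add_left (Finset.card_le_card hdiff) _

/-- A set covered by `A ∪ B` that is not an `α`-subset of `A` owes more than a `1 - α`
fraction of its points to `B`, so it is smaller than `|B| / (1 - α) ≤ L`. -/
theorem Finset.card_lt_of_subset_union_of_not_alphaSubset {V : Type*} [DecidableEq V]
    {α : ℝ} (hα1 : α ≤ 1) {L : ℕ} {S A B : Finset V} (hB : (B.card : ℝ) ≤ L * (1 - α))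
    (hS : S ⊆ A ∪ B) (hsparse : ((A ∩ S).card : ℝ) < α * S.card) : S.card < L := by
  have hcover : (S.card : ℝ) ≤ (A ∩ S).card + B.card := by
    exact_mod_cast Finset.card_le_card_inter_add_card_of_subset_union hS
  by_contra! hL
  have hL' : (L : ℝ) ≤ S.card := by exact_mod_cast hL
  nlinarith [mul_nonneg (sub_nonneg.2 hα1) (sub_nonneg.2 hL')]

theorem stmt0_general {V : Type*} [DecidableEq V] (G : SimpleGraph V)
    (α : ℝ) (hα1 : α ≤ 1) (L : ℕ) (A B : Finset V)
    (hA : ∀ S : Finset V, (G.induce (S : Set V)).Connected →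
      α * S.card ≤ ((A ∩ S).card : ℝ) → S.card ≤ L)
    (hB : (B.card : ℝ) ≤ L * (1 - α)) :
    ∀ S : Finset V, (G.induce (S : Set V)).Connected → S ⊆ A ∪ B → S.card ≤ L := by
  intro S hconn hS
  by_cases hdense : α * S.card ≤ ((A ∩ S).card : ℝ)
  · exact hA S hconn hdense
  · exact (Finset.card_lt_of_subset_union_of_not_alphaSubset hα1 hB hS (not_le.1 hdense)).le

/-- If every connected `α`-subset of `A` has size at most `L`
(i.e. `MaxConn_α(A) ≤ L`) and `|B| ≤ L·(1-α)`, then every connected subset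
of `A ∪ B` has size at most `L`. -/
theorem stmt0 {V : Type*} [Fintype V] [DecidableEq V] (G : SimpleGraph V)
    (α : ℝ) (hα0 : 0 < α) (hα1 : α ≤ 1) (L : ℕ) (A B : Finset V)
    (hA : ∀ S : Finset V, (G.induce (S : Set V)).Connected →
      α * S.card ≤ ((A ∩ S).card : ℝ) → S.card ≤ L)
    (hB : (B.card : ℝ) ≤ L * (1 - α)) :
    ∀ S : Finset V, (G.induce (S : Set V)).Connected → S ⊆ A ∪ B → S.card ≤ L :=
  stmt0_general G α hα1 L A B hA hB
end

section
/- Let H ∈ 𝔽₂^{m×n} with rank H = m and β > 0. Under the Gibbs distribution μ(x) ∝ e^{−β|Hx|} on 𝔽₂ⁿ, the pushforward distribution of the syndrome s = H x ∈ 𝔽₂^m is a product of i.i.d. Bernoulli random variables, each equal to 1 with probability e^{−β}/(1 + e^{−β}). -/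
/-!
Full rank makes `x ↦ Hx` a surjective group homomorphism `𝔽₂ⁿ → 𝔽₂ᵐ`, so every syndrome has
the same number `|ker H|` of preimages. Both sums in the ratio are therefore `|ker H|` times the
corresponding sums of `e^{-β|s|}` over syndromes, and the latter partition function factorizes
over coordinates as `(1 + e^{-β})^m`.
-/

open Finset

theorem Matrix.mulVec_surjective_of_rank_eq {m n K : Type*} [Fintype m] [Fintype n] [Field K]
    (A : Matrix m n K) (hA : A.rank = Fintype.card m) : Function.Surjective A.mulVec := by
  have hrange : LinearMap.range A.mulVecLin = ⊤ :=
    Submodule.eq_top_of_finrank_eq (by rw [← Matrix.rank, hA, Module.finrank_fintype_fun_eq_card])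
  exact LinearMap.range_eq_top.mp hrange

section SurjectiveHom

variable {G M F R : Type*} [AddGroup G] [Fintype G] [AddMonoid M] [DecidableEq M]
  [FunLike F G M] [AddMonoidHomClass F G M] [AddCommMonoid R]

theorem sum_fiber_comp_of_surjective (f : F) (hf : Function.Surjective f) (w : M → R) (y : M) :
    ∑ g ∈ univ.filter (fun g => f g = y), w (f g) = #{g | f g = 0} • w y := by
  rw [sum_congr rfl fun g hg => by rw [(mem_filter.mp hg).2], sum_const,
    AddMonoidHom.card_fiber_eq_of_mem_range f (hf y) ⟨0, map_zero f⟩]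

theorem sum_comp_of_surjective [Fintype M] (f : F) (hf : Function.Surjective f) (w : M → R) :
    ∑ g, w (f g) = #{g | f g = 0} • ∑ y, w y := by
  rw [sum_comp, image_univ_of_surjective hf, smul_sum]
  exact sum_congr rfl fun y _ =>
    by rw [AddMonoidHom.card_fiber_eq_of_mem_range f (hf y) ⟨0, map_zero f⟩]

end SurjectiveHom

section HammingWeight

variable {ι α R : Type*} [Fintype ι] [DecidableEq α] [Zero α]

theorem pow_hammingNorm_eq_prod [CommMonoid R] (r : R) (x : ι → α) :
    r ^ hammingNorm x = ∏ i, if x i ≠ 0 then r else 1 := by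
  rw [prod_ite, prod_const, prod_const_one, mul_one, hammingNorm]

theorem sum_pow_hammingNorm [Fintype α] [CommSemiring R] [DecidableEq ι] (r : R) :
    ∑ x : ι → α, r ^ hammingNorm x = (1 + (Fintype.card α - 1) • r) ^ Fintype.card ι := by
  have hcoord : ∑ a : α, (if a ≠ 0 then r else 1) = 1 + (Fintype.card α - 1) • r := by
    simp [sum_ite, filter_ne', filter_eq', card_univ]
  simp_rw [pow_hammingNorm_eq_prod]
  rw [← Fintype.prod_sum (fun _ a => if a ≠ 0 then r else 1), hcoord, prod_const, card_univ]

theorem pow_hammingNorm_div_eq_prod {K : Type*} [Field K] {r : K} (hr : 1 + r ≠ 0)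
    (x : ι → ZMod 2) :
    r ^ hammingNorm x / (1 + r) ^ Fintype.card ι
      = ∏ i, if x i = 1 then r / (1 + r) else 1 - r / (1 + r) := by
  rw [pow_hammingNorm_eq_prod, ← card_univ, ← prod_const, ← prod_div_distrib]
  refine prod_congr rfl fun i _ => ?_
  obtain h | h : x i = 0 ∨ x i = 1 := by generalize x i = a; revert a; decide
  · simp only [h, ne_eq, not_true_eq_false, if_false, zero_ne_one]
    field_simp
    ring
  · simp [h]

end HammingWeight

theorem stmt5_general {m n : ℕ} (H : Matrix (Fin m) (Fin n) (ZMod 2))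
    (hrank : H.rank = m) (β : ℝ) (s : Fin m → ZMod 2) :
    (∑ x ∈ univ.filter (fun x : Fin n → ZMod 2 => H.mulVec x = s),
        Real.exp (-β * hammingNorm (H.mulVec x))) /
      (∑ x : Fin n → ZMod 2, Real.exp (-β * hammingNorm (H.mulVec x)))
      = ∏ i : Fin m,
          (if s i = 1 then Real.exp (-β) / (1 + Real.exp (-β))
           else 1 - Real.exp (-β) / (1 + Real.exp (-β))) := by
  have hsurj : Function.Surjective H.mulVecLin :=
    H.mulVec_surjective_of_rank_eq (by rw [hrank, Fintype.card_fin])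
  have hweight : ∀ t : Fin m → ZMod 2,
      Real.exp (-β * hammingNorm t) = Real.exp (-β) ^ hammingNorm t := fun t => by
    rw [mul_comm, Real.exp_nat_mul]
  set K := #{x | H.mulVec x = 0}
  have hnum : ∑ x ∈ univ.filter (fun x => H.mulVec x = s),
      Real.exp (-β * hammingNorm (H.mulVec x)) = K • Real.exp (-β * hammingNorm s) :=
    sum_fiber_comp_of_surjective H.mulVecLin hsurj (fun t => Real.exp (-β * hammingNorm t)) s
  have hden : ∑ x, Real.exp (-β * hammingNorm (H.mulVec x))
      = K • ∑ t, Real.exp (-β * hammingNorm t) :=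
    sum_comp_of_surjective H.mulVecLin hsurj (fun t => Real.exp (-β * hammingNorm t))
  have hker : (K : ℝ) ≠ 0 :=
    Nat.cast_ne_zero.mpr (card_ne_zero_of_mem (mem_filter.mpr ⟨mem_univ _, H.mulVec_zero⟩))
  rw [hnum, hden, nsmul_eq_mul, nsmul_eq_mul, mul_div_mul_left _ _ hker, hweight,
    sum_congr rfl fun t _ => hweight t, sum_pow_hammingNorm, ZMod.card, Nat.add_one_sub_one,
    one_smul]
  exact pow_hammingNorm_div_eq_prod (by positivity : 1 + Real.exp (-β) ≠ 0) s

/-- For full-rank `H` and `β > 0`, under the Gibbs distribution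
`μ(x) ∝ e^{−β|Hx|}`, the pushforward distribution of the syndrome `s = Hx` is a
product of i.i.d. Bernoulli(`e^{−β}/(1+e^{−β})`) random variables: the probability
of each syndrome `s` factorizes as the corresponding product over coordinates. -/
theorem stmt5 {m n : ℕ} (H : Matrix (Fin m) (Fin n) (ZMod 2))
    (hrank : H.rank = m) (β : ℝ) (hβ : 0 < β) (s : Fin m → ZMod 2) :
    (∑ x ∈ univ.filter (fun x : Fin n → ZMod 2 => H.mulVec x = s),
        Real.exp (-β * hammingNorm (H.mulVec x))) /
      (∑ x : Fin n → ZMod 2, Real.exp (-β * hammingNorm (H.mulVec x)))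
      = ∏ i : Fin m,
          (if s i = 1 then Real.exp (-β) / (1 + Real.exp (-β))
           else 1 - Real.exp (-β) / (1 + Real.exp (-β))) :=
  stmt5_general H hrank β s
end

section
/- For every ε > 0 there exists N such that for all n with ρn ≥ N and 0 < ρ < 1/2, the volume of the Hamming ball S_n(ρ) = Σ_{l=0}^{⌊ρn⌋} C(n, l) satisfies S_n(ρ) ≤ (1+ε)·(1/√(2π))·√n·√(ρ/(1−ρ))·Υ(ρ)ⁿ, where Υ(ρ) = ρ^{−ρ}(1−ρ)^{ρ−1}. -/
/-!
Chernoff bound: for `l ≤ ρn` and `ρ ≤ 1/2` the binomial weight `ρ^l (1-ρ)^(n-l)` is at least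
`ρ^(ρn) (1-ρ)^((1-ρ)n) = Υ(ρ)^(-n)`, and these weights sum to at most `(ρ + (1-ρ))^n = 1` over the
ball, so `S_n(ρ) ≤ Υ(ρ)^n`. Once `ρn ≥ 7 > 2π` the prefactor `√(nρ / (2π(1-ρ)))` is at least `1`,
which absorbs the constant `(1+ε)/√(2π)`.
-/

open Finset Real

lemma sum_range_choose_mul_pow_le_one {p : ℝ} (hp0 : 0 ≤ p) (hp1 : p ≤ 1) {n k : ℕ}
    (hkn : k ≤ n) :
    ∑ l ∈ range (k + 1), (n.choose l : ℝ) * (p ^ l * (1 - p) ^ (n - l)) ≤ 1 :=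
  calc ∑ l ∈ range (k + 1), (n.choose l : ℝ) * (p ^ l * (1 - p) ^ (n - l))
      ≤ ∑ l ∈ range (n + 1), (n.choose l : ℝ) * (p ^ l * (1 - p) ^ (n - l)) :=
        sum_le_sum_of_subset_of_nonneg (range_subset_range.2 (by omega)) fun _ _ _ ↦
          mul_nonneg (Nat.cast_nonneg _)
            (mul_nonneg (pow_nonneg hp0 _) (pow_nonneg (by linarith) _))
    _ = (p + (1 - p)) ^ n := by rw [add_pow]; exact sum_congr rfl fun _ _ ↦ by ring
    _ = 1 := by simp

lemma rpow_mul_rpow_sub_le_of_le {a b : ℝ} (ha : 0 < a) (hab : a ≤ b) (t : ℝ) {x y : ℝ}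
    (hxy : x ≤ y) : a ^ y * b ^ (t - y) ≤ a ^ x * b ^ (t - x) := by
  have hb : 0 < b := ha.trans_le hab
  calc a ^ y * b ^ (t - y) = a ^ x * a ^ (y - x) * b ^ (t - y) := by
        rw [← rpow_add ha, add_sub_cancel]
    _ ≤ a ^ x * b ^ (y - x) * b ^ (t - y) := by
        gcongr
    _ = a ^ x * b ^ (t - x) := by
        rw [mul_assoc, ← rpow_add hb, sub_add_sub_cancel']

lemma entropy_base_pow_eq_inv {ρ : ℝ} (hρ0 : 0 < ρ) (hρ1 : ρ < 1) (n : ℕ) :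
    (ρ ^ (-ρ) * (1 - ρ) ^ (ρ - 1)) ^ n = (ρ ^ (ρ * n) * (1 - ρ) ^ ((n : ℝ) - ρ * n))⁻¹ := by
  have hq : 0 < 1 - ρ := by linarith
  rw [← rpow_natCast, mul_rpow (by positivity) (by positivity), ← rpow_mul hρ0.le,
    ← rpow_mul hq.le, mul_inv, ← rpow_neg hρ0.le, ← rpow_neg hq.le]
  congr 2 <;> ring

theorem sum_range_choose_le_entropy_base_pow {ρ : ℝ} (hρ0 : 0 < ρ) (hρ : ρ ≤ 1 / 2) {n k : ℕ}
    (hk : (k : ℝ) ≤ ρ * n) :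
    ∑ l ∈ range (k + 1), (n.choose l : ℝ) ≤ (ρ ^ (-ρ) * (1 - ρ) ^ (ρ - 1)) ^ n := by
  have hq : 0 < 1 - ρ := by linarith
  have hkn : k ≤ n := by
    have : (k : ℝ) ≤ n := hk.trans (by nlinarith [n.cast_nonneg (α := ℝ)])
    exact_mod_cast this
  rw [entropy_base_pow_eq_inv hρ0 (by linarith) n, ← one_div,
    le_div_iff₀ (mul_pos (rpow_pos_of_pos hρ0 _) (rpow_pos_of_pos hq _)), sum_mul]
  refine (sum_le_sum fun l hl ↦ mul_le_mul_of_nonneg_left ?_ (n.choose l).cast_nonneg).trans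
    (sum_range_choose_mul_pow_le_one hρ0.le (by linarith) hkn)
  have hlk : l ≤ k := Nat.lt_succ_iff.1 (mem_range.1 hl)
  simpa [← rpow_natCast, Nat.cast_sub (hlk.trans hkn)] using
    rpow_mul_rpow_sub_le_of_le hρ0 (by linarith : ρ ≤ 1 - ρ) n ((Nat.cast_le.2 hlk).trans hk)

lemma sqrt_two_pi_le_sqrt_mul_sqrt {ρ : ℝ} (hρ0 : 0 ≤ ρ) (hρ1 : ρ < 1) {n : ℕ}
    (hn : 2 * π ≤ ρ * n) : √(2 * π) ≤ √n * √(ρ / (1 - ρ)) := by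
  rw [← sqrt_mul n.cast_nonneg]
  refine sqrt_le_sqrt (hn.trans ?_)
  rw [mul_comm]
  exact mul_le_mul_of_nonneg_left (le_div_self hρ0 (by linarith) (by linarith)) n.cast_nonneg

/-- asymptotic upper bound on the volume of the Hamming ball:
for every `ε > 0` there is `N` such that whenever `ρ·n ≥ N` and `0 < ρ < 1/2`,
`S_n(ρ) = Σ_{l ≤ ρn} C(n,l) ≤ (1+ε)·(1/√(2π))·√n·√(ρ/(1−ρ))·Υ(ρ)^n`
with `Υ(ρ) = ρ^{−ρ}(1−ρ)^{ρ−1}`. -/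
theorem stmt8 : ∀ ε : ℝ, 0 < ε → ∃ N : ℕ, ∀ (n : ℕ) (ρ : ℝ),
    0 < ρ → ρ < 1/2 → (N : ℝ) ≤ ρ * n →
    (∑ l ∈ range (⌊ρ * n⌋₊ + 1), (n.choose l : ℝ))
      ≤ (1 + ε) * (1 / Real.sqrt (2 * Real.pi)) * Real.sqrt n
          * Real.sqrt (ρ / (1 - ρ)) * (ρ ^ (-ρ) * (1 - ρ) ^ (ρ - 1)) ^ n := by
  intro ε hε
  refine ⟨7, fun n ρ hρ0 hρ hN ↦ ?_⟩
  have h2π : 2 * π ≤ ρ * n := by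
    have : (7 : ℝ) ≤ ρ * n := by exact_mod_cast hN
    linarith [pi_lt_d2]
  have hprefactor : 1 ≤ 1 / √(2 * π) * √n * √(ρ / (1 - ρ)) := by
    rw [mul_assoc, one_div_mul_eq_div, one_le_div (by positivity)]
    exact sqrt_two_pi_le_sqrt_mul_sqrt hρ0.le (by linarith) h2π
  calc ∑ l ∈ range (⌊ρ * n⌋₊ + 1), (n.choose l : ℝ)
      ≤ (ρ ^ (-ρ) * (1 - ρ) ^ (ρ - 1)) ^ n :=
        sum_range_choose_le_entropy_base_pow hρ0 hρ.le
          (Nat.floor_le (mul_nonneg hρ0.le n.cast_nonneg))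
    _ ≤ _ := by
        refine le_mul_of_one_le_left
          (pow_nonneg (mul_nonneg (rpow_nonneg hρ0.le _) (rpow_nonneg (by linarith) _)) n) ?_
        simpa only [mul_assoc] using
          one_le_mul_of_one_le_of_one_le (by linarith : (1 : ℝ) ≤ 1 + ε) hprefactor
end

section
/- The number p(n) of integer partitions of n satisfies p(n) < e^{π√(2n/3)} for all n ≥ 1. -/
/-!
For `0 ≤ x < 1`, recording the multiplicity of each part embeds the partitions of `n` into the
terms of `∏_{k ≤ n} (1 + x^k + x^{2k} + ⋯)` of degree `n`, so `p(n) xⁿ ≤ ∏_{k ≤ n} (1 - x^k)⁻¹`.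
Expanding `-log (1 - x^k)` and summing over `k` first, the logarithm of this product is at most
`∑_j x^j / (j (1 - x^j)) ≤ (π²/6) · x / (1 - x)`, using `j x^{j-1} (1 - x) ≤ 1 - x^j`.
With `u = x / (1 - x)` one has `x⁻¹ = 1 + 1/u < e^{1/u}`, hence `p(n) < exp (π² u / 6 + n / u)`,
and `u = √(6n) / π` balances the two terms.
-/

open Finset Real

namespace Nat.Partition

variable {n : ℕ}

def multiplicities (P : n.Partition) (i : Fin n) : ℕ := P.parts.count ((i : ℕ) + 1)

lemma count_parts_eq_zero_of_notMem_Icc (P : n.Partition) {m : ℕ} (hm : m ∉ Icc 1 n) :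
    P.parts.count m = 0 :=
  Multiset.count_eq_zero.2 fun h => hm (mem_Icc.2 ⟨P.parts_pos h, P.le_of_mem_parts h⟩)

lemma count_parts_le (P : n.Partition) (m : ℕ) : P.parts.count m ≤ n :=
  calc P.parts.count m ≤ Multiset.card P.parts := Multiset.count_le_card _ _
    _ ≤ P.parts.sum := by simpa using Multiset.card_nsmul_le_sum fun _ h => P.parts_pos h
    _ = n := P.parts_sum

lemma sum_mul_multiplicities (P : n.Partition) :
    ∑ i : Fin n, ((i : ℕ) + 1) * P.multiplicities i = n := by
  have hIcc : ∑ m ∈ Icc 1 n, P.parts.count m * m = n := by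
    simpa [toFinsuppAntidiag] using
      (mem_finsuppAntidiag.1 P.toFinsuppAntidiag_mem_finsuppAntidiag).1
  unfold multiplicities
  rw [Fin.sum_univ_eq_sum_range (fun i => (i + 1) * P.parts.count (i + 1)),
    range_eq_Ico, sum_Ico_add' (fun m => m * P.parts.count m), zero_add,
    Ico_add_one_right_eq_Icc]
  exact (sum_congr rfl fun m _ => mul_comm _ _).trans hIcc

lemma multiplicities_injective : Function.Injective (multiplicities (n := n)) := by
  intro P Q h
  rw [Nat.Partition.ext_iff, Multiset.ext]
  intro m
  by_cases hm : m ∈ Icc 1 n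
  · obtain ⟨hm1, hmn⟩ := mem_Icc.1 hm
    simpa [multiplicities, Nat.sub_add_cancel hm1] using congrFun h ⟨m - 1, by omega⟩
  · rw [P.count_parts_eq_zero_of_notMem_Icc hm, Q.count_parts_eq_zero_of_notMem_Icc hm]

lemma card_mul_pow_le_prod_sum {R : Type*} [CommSemiring R] [PartialOrder R] [IsOrderedRing R]
    {x : R} (hx : 0 ≤ x) :
    (Fintype.card n.Partition : R) * x ^ n
      ≤ ∏ i : Fin n, ∑ m ∈ range (n + 1), x ^ (((i : ℕ) + 1) * m) := by
  classical
  have hmem : ∀ P : n.Partition, P.multiplicities ∈ Fintype.piFinset fun _ => range (n + 1) :=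
    fun P => Fintype.mem_piFinset.2 fun i => mem_range.2 (Nat.lt_succ_of_le (P.count_parts_le _))
  calc (Fintype.card n.Partition : R) * x ^ n
      = ∑ P : n.Partition, ∏ i : Fin n, x ^ (((i : ℕ) + 1) * P.multiplicities i) := by
        simp only [prod_pow_eq_pow_sum, sum_mul_multiplicities, sum_const, nsmul_eq_mul]
        rw [Finset.card_univ]
    _ = ∑ g ∈ univ.image multiplicities, ∏ i : Fin n, x ^ (((i : ℕ) + 1) * g i) := by
        rw [sum_image multiplicities_injective.injOn]
    _ ≤ ∑ g ∈ Fintype.piFinset fun _ => range (n + 1), ∏ i : Fin n, x ^ (((i : ℕ) + 1) * g i) :=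
        sum_le_sum_of_subset_of_nonneg (image_subset_iff.2 fun P _ => hmem P)
          fun g _ _ => prod_nonneg fun i _ => pow_nonneg hx _
    _ = ∏ i : Fin n, ∑ m ∈ range (n + 1), x ^ (((i : ℕ) + 1) * m) := by
        rw [prod_univ_sum]

end Nat.Partition

lemma mul_pow_mul_one_sub_le_one_sub_pow {R : Type*} [CommRing R] [PartialOrder R] [IsOrderedRing R]
    {x : R} (hx0 : 0 ≤ x) (hx1 : x ≤ 1) (j : ℕ) :
    (j + 1) * x ^ j * (1 - x) ≤ 1 - x ^ (j + 1) := by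
  rw [← geom_sum_mul_neg]
  refine mul_le_mul_of_nonneg_right ?_ (sub_nonneg.2 hx1)
  simpa using card_nsmul_le_sum (range (j + 1)) (x ^ ·) (x ^ j)
    fun i hi => pow_le_pow_of_le_one hx0 hx1 (Nat.lt_succ_iff.1 (mem_range.1 hi))

lemma pow_div_one_sub_pow_le {K : Type*} [Field K] [LinearOrder K] [IsStrictOrderedRing K]
    {x : K} (hx0 : 0 ≤ x) (hx1 : x < 1) (j : ℕ) :
    x ^ (j + 1) / (1 - x ^ (j + 1)) ≤ x / ((j + 1) * (1 - x)) := by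
  have hpow : x ^ (j + 1) < 1 := pow_lt_one₀ hx0 hx1 j.succ_ne_zero
  rw [div_le_div_iff₀ (sub_pos.2 hpow) (by have := sub_pos.2 hx1; positivity)]
  calc x ^ (j + 1) * ((j + 1) * (1 - x)) = x * ((j + 1) * x ^ j * (1 - x)) := by ring
    _ ≤ x * (1 - x ^ (j + 1)) :=
      mul_le_mul_of_nonneg_left (mul_pow_mul_one_sub_le_one_sub_pow hx0 hx1.le j) hx0

lemma geom_sum_le_inv_one_sub {K : Type*} [Field K] [LinearOrder K] [IsStrictOrderedRing K]
    {y : K} (hy0 : 0 ≤ y) (hy1 : y < 1) (n : ℕ) :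
    ∑ k ∈ range n, y ^ k ≤ (1 - y)⁻¹ := by
  simpa [← range_eq_Ico] using geom_sum_Ico_le_of_lt_one (m := 0) (n := n) hy0 hy1

lemma sum_range_pow_succ_le {K : Type*} [Field K] [LinearOrder K] [IsStrictOrderedRing K]
    {y : K} (hy0 : 0 ≤ y) (hy1 : y < 1) (n : ℕ) :
    ∑ k ∈ range n, y ^ (k + 1) ≤ y / (1 - y) := by
  rw [range_eq_Ico, sum_Ico_add' (y ^ ·) 0 n 1, zero_add]
  simpa only [pow_one] using geom_sum_Ico_le_of_lt_one (m := 1) (n := n + 1) hy0 hy1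

lemma hasSum_one_div_succ_sq : HasSum (fun j : ℕ => 1 / ((j : ℝ) + 1) ^ 2) (π ^ 2 / 6) := by
  simpa using (hasSum_nat_add_iff' 1).2 hasSum_zeta_two

lemma sum_neg_log_one_sub_pow_le {x : ℝ} (hx0 : 0 ≤ x) (hx1 : x < 1) (n : ℕ) :
    ∑ k ∈ range n, -log (1 - x ^ (k + 1)) ≤ π ^ 2 / 6 * (x / (1 - x)) := by
  have hlog : HasSum (fun j : ℕ => ∑ k ∈ range n, (x ^ (k + 1)) ^ (j + 1) / (j + 1))
      (∑ k ∈ range n, -log (1 - x ^ (k + 1))) :=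
    hasSum_sum fun k _ => hasSum_pow_div_log_of_abs_lt_one <| by
      rw [abs_of_nonneg (by positivity)]; exact pow_lt_one₀ hx0 hx1 k.succ_ne_zero
  rw [mul_comm]
  refine hasSum_le (fun j => ?_) hlog (hasSum_one_div_succ_sq.mul_left (x / (1 - x)))
  have hj : (0 : ℝ) < j + 1 := by positivity
  calc ∑ k ∈ range n, (x ^ (k + 1)) ^ (j + 1) / (j + 1)
      = (∑ k ∈ range n, (x ^ (j + 1)) ^ (k + 1)) / (j + 1) := by
        rw [sum_div]; simp only [← pow_mul, mul_comm]
    _ ≤ x ^ (j + 1) / (1 - x ^ (j + 1)) / (j + 1) := by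
        gcongr
        exact sum_range_pow_succ_le (by positivity) (pow_lt_one₀ hx0 hx1 j.succ_ne_zero) n
    _ ≤ x / ((j + 1) * (1 - x)) / (j + 1) :=
        div_le_div_of_nonneg_right (pow_div_one_sub_pow_le hx0 hx1 j) hj.le
    _ = x / (1 - x) * (1 / ((j : ℝ) + 1) ^ 2) := by
        field_simp

lemma prod_inv_one_sub_pow_le_exp {x : ℝ} (hx0 : 0 ≤ x) (hx1 : x < 1) (n : ℕ) :
    ∏ k ∈ range n, (1 - x ^ (k + 1))⁻¹ ≤ exp (π ^ 2 / 6 * (x / (1 - x))) :=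
  calc ∏ k ∈ range n, (1 - x ^ (k + 1))⁻¹ = exp (∑ k ∈ range n, -log (1 - x ^ (k + 1))) := by
        rw [exp_sum]
        refine prod_congr rfl fun k _ => ?_
        rw [exp_neg, exp_log (sub_pos.2 (pow_lt_one₀ hx0 hx1 k.succ_ne_zero))]
    _ ≤ exp (π ^ 2 / 6 * (x / (1 - x))) := exp_le_exp.2 (sum_neg_log_one_sub_pow_le hx0 hx1 n)

lemma card_partition_mul_pow_le {x : ℝ} (hx0 : 0 ≤ x) (hx1 : x < 1) (n : ℕ) :
    (Fintype.card n.Partition : ℝ) * x ^ n ≤ exp (π ^ 2 / 6 * (x / (1 - x))) :=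
  calc (Fintype.card n.Partition : ℝ) * x ^ n
      ≤ ∏ i : Fin n, ∑ m ∈ range (n + 1), x ^ (((i : ℕ) + 1) * m) :=
        Nat.Partition.card_mul_pow_le_prod_sum hx0
    _ ≤ ∏ i : Fin n, (1 - x ^ ((i : ℕ) + 1))⁻¹ := by
        refine prod_le_prod (fun i _ => by positivity) fun i _ => ?_
        simp only [pow_mul]
        exact geom_sum_le_inv_one_sub (by positivity) (pow_lt_one₀ hx0 hx1 (Nat.succ_ne_zero _)) _
    _ = ∏ k ∈ range n, (1 - x ^ (k + 1))⁻¹ :=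
        Fin.prod_univ_eq_prod_range (fun k => (1 - x ^ (k + 1))⁻¹) n
    _ ≤ exp (π ^ 2 / 6 * (x / (1 - x))) := prod_inv_one_sub_pow_le_exp hx0 hx1 n

lemma card_partition_lt_exp {n : ℕ} (hn : n ≠ 0) {u : ℝ} (hu : 0 < u) :
    (Fintype.card n.Partition : ℝ) < exp (π ^ 2 / 6 * u + n / u) := by
  set x := u / (1 + u) with hx
  have hx0 : 0 < x := by positivity
  have hx1 : x < 1 := (div_lt_one (by positivity)).2 (by linarith)
  have hxu : x / (1 - x) = u := by
    rw [hx]; field_simp; ring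
  have hinv : x⁻¹ ^ n < exp (n / u) := by
    have h : x⁻¹ < exp (1 / u) := by
      rw [hx, inv_div, add_div, div_self hu.ne']
      exact add_one_lt_exp (by positivity)
    calc x⁻¹ ^ n < exp (1 / u) ^ n := pow_lt_pow_left₀ h (by positivity) hn
      _ = exp (n / u) := by rw [← exp_nat_mul, mul_one_div]
  calc (Fintype.card n.Partition : ℝ) = Fintype.card n.Partition * x ^ n * x⁻¹ ^ n := by
        rw [mul_assoc, ← mul_pow, mul_inv_cancel₀ hx0.ne', one_pow, mul_one]
    _ ≤ exp (π ^ 2 / 6 * u) * x⁻¹ ^ n := by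
        gcongr
        simpa only [hxu] using card_partition_mul_pow_le hx0.le hx1 n
    _ < exp (π ^ 2 / 6 * u) * exp (n / u) := by gcongr
    _ = exp (π ^ 2 / 6 * u + n / u) := (exp_add _ _).symm

/-- the number of integer partitions of `n` satisfies
`p(n) < e^{π√(2n/3)}` for all `n ≥ 1`. -/
theorem stmt9 (n : ℕ) (hn : 1 ≤ n) :
    (Fintype.card (Nat.Partition n) : ℝ)
      < Real.exp (Real.pi * Real.sqrt (2 * n / 3)) := by
  set s := √(2 * n / 3)
  have hs : 0 < s := by positivity
  have hs2 : s ^ 2 = 2 * n / 3 := sq_sqrt (by positivity)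
  convert card_partition_lt_exp (n := n) (by omega) (u := 3 * s / π) (by positivity) using 2
  field_simp
  linear_combination 9 * hs2
end

section
/- Let H ∈ 𝔽₂^{m×n} define a classical code with (δ, γ)-confinement, and fix x₀ ∈ 𝔽₂ⁿ with syndrome Σ₀ = H x₀. Suppose that for some ζ > 0 every connected ζ-subset of the support of Σ₀ (in the check graph) has size less than η. Then for every x ∈ 𝔽₂ⁿ whose support is connected (in the bit graph) with η ≤ |x| ≤ δ, the energy difference satisfies |H(x₀ + x)| − |H x₀| ≥ (γ − 2ζ·w_bit)·|x|, where w_bit is an upper bound on the number of checks containing any single bit. -/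
/-!
Let `Γ` be the set of checks touching the support `X` of `x`. Connectedness of `X` in the bit
graph makes `Γ` connected in the check graph, and confinement makes the columns of `H` indexed by
`X` linearly independent already on the rows `Γ`, so `|Γ| ≥ |X| ≥ η`. Hence `Γ` is not a
`ζ`-subset of `supp Σ₀`; as `supp (H x) ⊆ Γ`, this gives `|Σ₀ ∧ H x| < ζ |Γ| ≤ ζ w_bit |X|`.
The identity `|H (x₀ + x)| - |H x₀| = |H x| - 2 |Σ₀ ∧ H x|` and `|H x| ≥ γ |X|` finish the proof.
-/

open Finset

/-- The support of a binary vector, as a `Finset`. -/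
def bsupport {k : ℕ} (x : Fin k → ZMod 2) : Finset (Fin k) :=
  univ.filter (fun i => x i ≠ 0)

/-- The bit graph of a parity check matrix: two bits are adjacent if they share a check. -/
def bitGraph {m n : ℕ} (H : Matrix (Fin m) (Fin n) (ZMod 2)) : SimpleGraph (Fin n) :=
  SimpleGraph.fromRel (fun i j => ∃ c : Fin m, H c i = 1 ∧ H c j = 1)

/-- The check graph of a parity check matrix: two checks are adjacent if they share a bit. -/
def checkGraph {m n : ℕ} (H : Matrix (Fin m) (Fin n) (ZMod 2)) : SimpleGraph (Fin m) :=
  SimpleGraph.fromRel (fun c c' => ∃ i : Fin n, H c i = 1 ∧ H c' i = 1)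

open Matrix

lemma Matrix.card_le_card_of_mulVec_eq_zero {K ι κ : Type*} [Field K] [Fintype ι] [Fintype κ]
    (A : Matrix κ ι K) (hA : ∀ v, A *ᵥ v = 0 → v = 0) : Fintype.card ι ≤ Fintype.card κ := by
  simpa using LinearMap.finrank_le_finrank_of_injective
    (f := A.mulVecLin) ((injective_iff_map_eq_zero _).2 hA)

lemma hammingNorm_eq_card_bsupport {k : ℕ} (x : Fin k → ZMod 2) :
    hammingNorm x = #(bsupport x) := rfl

lemma hammingNorm_add_zmod_two {k : ℕ} (a b : Fin k → ZMod 2) :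
    hammingNorm (a + b) + 2 * #(bsupport a ∩ bsupport b) = hammingNorm a + hammingNorm b := by
  simp only [hammingNorm_eq_card_bsupport, bsupport, ← filter_and, card_filter, mul_sum,
    ← sum_add_distrib, Pi.add_apply]
  refine sum_congr rfl fun i _ => ?_
  generalize a i = p
  generalize b i = q
  revert p q
  decide

section CheckNeighborhood

variable {m n : ℕ} (H : Matrix (Fin m) (Fin n) (ZMod 2))

def checkNeighborhood (X : Finset (Fin n)) : Finset (Fin m) :=
  X.biUnion fun i => {c | H c i = 1}

variable {H}

lemma bitGraph_adj {i j : Fin n} :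
    (bitGraph H).Adj i j ↔ i ≠ j ∧ ∃ c, H c i = 1 ∧ H c j = 1 := by
  simp only [bitGraph, SimpleGraph.fromRel_adj, and_comm (a := H _ i = 1), or_self]

lemma checkGraph_adj {c c' : Fin m} :
    (checkGraph H).Adj c c' ↔ c ≠ c' ∧ ∃ i, H c i = 1 ∧ H c' i = 1 := by
  simp only [checkGraph, SimpleGraph.fromRel_adj, and_comm (a := H c _ = 1), or_self]

lemma mem_checkNeighborhood {X : Finset (Fin n)} {c : Fin m} :
    c ∈ checkNeighborhood H X ↔ ∃ i ∈ X, H c i = 1 := by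
  simp [checkNeighborhood]

lemma card_checkNeighborhood_le {X : Finset (Fin n)} {w : ℕ}
    (hdeg : ∀ i ∈ X, #{c | H c i = 1} ≤ w) : #(checkNeighborhood H X) ≤ #X * w :=
  card_biUnion_le_card_mul _ _ _ hdeg

lemma bsupport_mulVec_subset_checkNeighborhood (x : Fin n → ZMod 2) :
    bsupport (H *ᵥ x) ⊆ checkNeighborhood H (bsupport x) := by
  intro c hc
  simp only [bsupport, mem_filter, mem_univ, true_and, mulVec, dotProduct] at hc
  obtain ⟨i, -, hi⟩ := exists_ne_zero_of_sum_ne_zero hc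
  refine mem_checkNeighborhood.2 ⟨i, ?_, Fin.eq_one_of_ne_zero _ (left_ne_zero_of_mul hi)⟩
  simpa [bsupport] using right_ne_zero_of_mul hi

lemma reachable_induce_checkNeighborhood_of_common_bit {X : Finset (Fin n)}
    {c c' : (checkNeighborhood H X : Set (Fin m))} {i : Fin n} (hc : H c i = 1) (hc' : H c' i = 1) :
    ((checkGraph H).induce (checkNeighborhood H X : Set (Fin m))).Reachable c c' := by
  obtain rfl | hne := eq_or_ne c c'
  · rfl
  · exact SimpleGraph.Adj.reachable <| checkGraph_adj.2 ⟨Subtype.coe_injective.ne hne, i, hc, hc'⟩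

lemma preconnected_induce_checkNeighborhood {X : Finset (Fin n)}
    (hX : ((bitGraph H).induce (X : Set (Fin n))).Preconnected) :
    ((checkGraph H).induce (checkNeighborhood H X : Set (Fin m))).Preconnected := by
  suffices key : ∀ (i j : (X : Set (Fin n))) (_ : ((bitGraph H).induce _).Walk i j)
      (c c' : (checkNeighborhood H X : Set (Fin m))), H c i = 1 → H c' j = 1 →
      ((checkGraph H).induce (checkNeighborhood H X : Set (Fin m))).Reachable c c' by
    intro c c'
    obtain ⟨i, hi, hci⟩ := mem_checkNeighborhood.1 c.2
    obtain ⟨j, hj, hcj⟩ := mem_checkNeighborhood.1 c'.2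
    exact key ⟨i, hi⟩ ⟨j, hj⟩ (hX _ _).some c c' hci hcj
  intro i j w
  induction w with
  | nil => exact fun c c' hc hc' => reachable_induce_checkNeighborhood_of_common_bit hc hc'
  | @cons i k j hik _ ih =>
    intro c c' hc hc'
    obtain ⟨-, d, hdi, hdk⟩ := bitGraph_adj.1 hik
    have hd : d ∈ checkNeighborhood H X := mem_checkNeighborhood.2 ⟨i, i.2, hdi⟩
    exact (reachable_induce_checkNeighborhood_of_common_bit (c' := ⟨d, hd⟩) hc hdi).trans
      (ih ⟨d, hd⟩ c' hdk hc')

lemma card_le_card_checkNeighborhood {X : Finset (Fin n)}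
    (hker : ∀ y, bsupport y ⊆ X → H *ᵥ y = 0 → y = 0) : #X ≤ #(checkNeighborhood H X) := by
  set Γ := checkNeighborhood H X
  suffices hsub : ∀ v, H.submatrix ((↑) : Γ → Fin m) ((↑) : X → Fin n) *ᵥ v = 0 → v = 0 by
    simpa using Matrix.card_le_card_of_mulVec_eq_zero _ hsub
  intro v hv
  let y : Fin n → ZMod 2 := fun j => if h : j ∈ X then v ⟨j, h⟩ else 0
  have hy : ∀ c, (H *ᵥ y) c = ∑ j : X, H c j * v j := by
    intro c
    rw [mulVec, dotProduct, ← sum_subset (subset_univ X) fun j _ hj => by simp [y, hj],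
      ← sum_coe_sort X]
    simp [y]
  have hHy : H *ᵥ y = 0 := by
    funext c
    rw [hy]
    by_cases hc : c ∈ Γ
    · exact congrFun hv ⟨c, hc⟩
    · refine sum_eq_zero fun j _ => ?_
      have : H c j = 0 := by
        by_contra h
        exact hc (mem_checkNeighborhood.2 ⟨j, j.2, Fin.eq_one_of_ne_zero _ h⟩)
      simp [this]
  have hy_supp : bsupport y ⊆ X := fun j hj => by
    by_contra hjX
    simp [bsupport, y, hjX] at hj
  funext j
  simpa [y] using congrFun (hker y hy_supp hHy) j

lemma card_le_card_checkNeighborhood_of_confinement {δ γ : ℝ} (hγ : 0 < γ)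
    (hconf : ∀ y : Fin n → ZMod 2, (hammingNorm y : ℝ) ≤ δ →
      γ * hammingNorm y ≤ (hammingNorm (H *ᵥ y) : ℝ))
    {X : Finset (Fin n)} (hX : (#X : ℝ) ≤ δ) : #X ≤ #(checkNeighborhood H X) := by
  refine card_le_card_checkNeighborhood fun y hy hHy => ?_
  have h := hconf y ((Nat.cast_le.2 (card_le_card hy)).trans hX)
  rw [hHy, hammingNorm_zero, Nat.cast_zero] at h
  have : (hammingNorm y : ℝ) ≤ 0 := nonpos_of_mul_nonpos_right h hγ
  exact hammingNorm_eq_zero.1 (by exact_mod_cast this.antisymm (Nat.cast_nonneg _))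

end CheckNeighborhood

/-- barriers around states with sparse syndromes. Suppose `H` has
`(δ, γ)`-confinement, the bit-degree is at most `w_bit`, and every connected
(in the check graph) `ζ`-subset of the support of the syndrome `Σ₀ = H x₀` has
size less than `η`. Then for every `x` with connected support (in the bit graph)
and `η ≤ |x| ≤ δ`, the energy difference satisfies
`|H(x₀+x)| − |H x₀| ≥ (γ − 2ζ·w_bit)·|x|`. -/
theorem stmt13 {m n : ℕ} (H : Matrix (Fin m) (Fin n) (ZMod 2))
    (δ γ ζ η : ℝ) (hγ : 0 < γ) (hζ : 0 < ζ) (w_bit : ℕ)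
    (hconf : ∀ x : Fin n → ZMod 2, (hammingNorm x : ℝ) ≤ δ →
      γ * hammingNorm x ≤ (hammingNorm (H.mulVec x) : ℝ))
    (hdeg : ∀ i : Fin n, ((univ.filter fun c : Fin m => H c i = 1).card : ℝ) ≤ w_bit)
    (x₀ : Fin n → ZMod 2)
    (hSigma : ∀ S : Finset (Fin m),
      ((checkGraph H).induce (S : Set (Fin m))).Connected →
      ζ * S.card ≤ ((bsupport (H.mulVec x₀) ∩ S).card : ℝ) → (S.card : ℝ) < η)
    (x : Fin n → ZMod 2)
    (hxconn : ((bitGraph H).induce ((bsupport x : Finset (Fin n)) : Set (Fin n))).Connected)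
    (hlow : η ≤ (hammingNorm x : ℝ)) (hupp : (hammingNorm x : ℝ) ≤ δ) :
    (γ - 2 * ζ * w_bit) * hammingNorm x
      ≤ (hammingNorm (H.mulVec (x₀ + x)) : ℝ) - hammingNorm (H.mulVec x₀) := by
  set X := bsupport x
  set Γ := checkNeighborhood H X
  set S₀ := bsupport (H *ᵥ x₀)
  have hX : (hammingNorm x : ℝ) = #X := rfl
  have hΓ_le : (#Γ : ℝ) ≤ w_bit * #X := by
    rw [mul_comm]
    exact_mod_cast card_checkNeighborhood_le fun i _ => by exact_mod_cast hdeg i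
  have hX_le : #X ≤ #Γ := card_le_card_checkNeighborhood_of_confinement hγ hconf hupp
  have hΓ_conn : ((checkGraph H).induce (Γ : Set (Fin m))).Connected := by
    obtain ⟨⟨i, hi⟩⟩ := hxconn.nonempty
    obtain ⟨c, hc⟩ := card_pos.1 ((card_pos.2 ⟨i, hi⟩).trans_le hX_le)
    have : Nonempty (Γ : Set (Fin m)) := ⟨c, hc⟩
    exact ⟨preconnected_induce_checkNeighborhood hxconn.preconnected⟩
  have hsparse : (#(S₀ ∩ Γ) : ℝ) < ζ * #Γ := by
    by_contra! h
    exact (hSigma Γ hΓ_conn h).not_ge (hlow.trans (by exact_mod_cast hX_le))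
  have hoverlap : (#(S₀ ∩ bsupport (H *ᵥ x)) : ℝ) ≤ #(S₀ ∩ Γ) := by
    exact_mod_cast card_le_card
      (inter_subset_inter_left (bsupport_mulVec_subset_checkNeighborhood x))
  have henergy : (hammingNorm (H *ᵥ (x₀ + x)) : ℝ) + 2 * #(S₀ ∩ bsupport (H *ᵥ x)) =
      hammingNorm (H *ᵥ x₀) + hammingNorm (H *ᵥ x) := by
    rw [mulVec_add]
    exact_mod_cast hammingNorm_add_zmod_two _ _
  have hHx : γ * #X ≤ (hammingNorm (H *ᵥ x) : ℝ) := hconf x hupp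
  rw [hX]
  linarith [mul_le_mul_of_nonneg_left hΓ_le hζ.le]
end

section
/- Define f(T) = (1−r)·[log(1 + e^{−1/T}) + 1/(T(1 + e^{1/T}))] − log Υ(2(1−r)/(γ(1 + e^{1/T}))) with Υ(ρ) = ρ^{−ρ}(1−ρ)^{ρ−1}. For r = 1/421 and γ = 3, f(T) > 0 for all sufficiently small T > 0, and f(T) → 0 as T → 0⁺. -/
/-!
With `u = 1/T`, `a = 1 - r`, `c = 2a/γ` and the Fermi factor `s = 1/(1 + eᵘ)` one has
`f = a (log (1 + e⁻ᵘ) + u s) - H(c s)`, where `H` is the binary entropy (`log Υ = H`).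
The bound `H(p) ≤ p (1 - log p)`, the identity `log s = -u - log (1 + e⁻ᵘ)` and
`c log c ≥ c - 1` give `f ≥ s ((a - c) u - 1)`, which is positive for `T < a - c`;
this threshold is positive exactly when `γ > 2`.
On the other side `H ≥ 0` gives `f ≤ a (e⁻ᵘ + u e⁻ᵘ) → 0`.
-/

/-- `Υ(ρ) = ρ^{−ρ}(1−ρ)^{ρ−1}` (real powers; `Υ(0) = 1` by `rpow` conventions). -/
noncomputable def Upsilon (ρ : ℝ) : ℝ := ρ ^ (-ρ) * (1 - ρ) ^ (ρ - 1)

/-- The function `f(T)` from the upper bound on the weight of typical Gibbs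
state components, for rate `r` and confinement coefficient `γ`. -/
noncomputable def fTQSG (r γ T : ℝ) : ℝ :=
  (1 - r) * (Real.log (1 + Real.exp (-1 / T)) + 1 / (T * (1 + Real.exp (1 / T))))
    - Real.log (Upsilon (2 * (1 - r) / (γ * (1 + Real.exp (1 / T)))))

open Real Filter Topology

lemma log_Upsilon {ρ : ℝ} (h0 : 0 < ρ) (h1 : ρ < 1) : log (Upsilon ρ) = binEntropy ρ := by
  have h1' : 0 < 1 - ρ := sub_pos.2 h1
  rw [Upsilon, log_mul (rpow_pos_of_pos h0 _).ne' (rpow_pos_of_pos h1' _).ne', log_rpow h0,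
    log_rpow h1', binEntropy, log_inv, log_inv]
  ring

lemma binEntropy_le_mul_one_sub_log {p : ℝ} (hp : p ≤ 1) : binEntropy p ≤ p * (1 - log p) := by
  have := self_sub_one_le_mul_log (sub_nonneg.2 hp)
  rw [binEntropy, log_inv, log_inv]
  linarith

lemma log_one_add_exp (u : ℝ) : log (1 + exp u) = u + log (1 + exp (-u)) := by
  rw [← log_exp u, ← log_mul (exp_pos u).ne' (by positivity), log_exp, mul_add, ← exp_add]
  simp [add_comm]

lemma fTQSG_inv_eq {r γ : ℝ} (u : ℝ) :
    fTQSG r γ u⁻¹ = (1 - r) * (log (1 + exp (-u)) + u * (1 + exp u)⁻¹)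
      - log (Upsilon (2 * (1 - r) / γ * (1 + exp u)⁻¹)) := by
  simp only [fTQSG, div_eq_mul_inv, inv_inv, mul_inv]
  ring_nf

lemma two_mul_one_sub_div_mul_inv_mem_Ioo {r γ : ℝ} (hr1 : r < 1) (hγ : 2 < γ) (u : ℝ) :
    2 * (1 - r) / γ * (1 + exp u)⁻¹ ∈ Set.Ioo 0 (1 - r) := by
  have hc : 0 < 2 * (1 - r) / γ := div_pos (by linarith) (by linarith)
  have hs1 : (1 + exp u)⁻¹ < 1 := inv_lt_one_of_one_lt₀ (by linarith [exp_pos u])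
  refine ⟨by positivity, ?_⟩
  calc 2 * (1 - r) / γ * (1 + exp u)⁻¹ ≤ 2 * (1 - r) / γ := mul_le_of_le_one_right hc.le hs1.le
    _ < 1 - r := by rw [div_lt_iff₀ (by linarith)]; nlinarith

lemma fTQSG_inv_ge {r γ : ℝ} (hr0 : 0 ≤ r) (hr1 : r < 1) (hγ : 2 < γ) (u : ℝ) :
    (1 + exp u)⁻¹ * ((1 - r) * (1 - 2 / γ) * u - 1) ≤ fTQSG r γ u⁻¹ := by
  obtain ⟨hρ0, hρa⟩ := two_mul_one_sub_div_mul_inv_mem_Ioo hr1 hγ u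
  rw [fTQSG_inv_eq, log_Upsilon hρ0 (by linarith)]
  set c := 2 * (1 - r) / γ
  set s := (1 + exp u)⁻¹
  set L := log (1 + exp (-u))
  have hc : 0 < c := div_pos (by linarith) (by linarith)
  have hs : 0 < s := by positivity
  have hlog : log (c * s) = log c - u - L := by
    rw [log_mul hc.ne' hs.ne', log_inv, log_one_add_exp]; ring
  have hH := binEntropy_le_mul_one_sub_log (p := c * s) (by linarith)
  have hclog : 0 ≤ s * (c * log c - (c - 1)) :=
    mul_nonneg hs.le (sub_nonneg.2 (self_sub_one_le_mul_log hc.le))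
  have hL : 0 ≤ L * (1 - r - c * s) :=
    mul_nonneg (log_nonneg (by linarith [exp_pos (-u)])) (by linarith)
  have hcγ : (1 - r) * (1 - 2 / γ) = 1 - r - c := by simp only [c]; ring
  rw [hlog] at hH
  rw [hcγ]
  linarith

lemma fTQSG_inv_le {r γ : ℝ} (hr0 : 0 ≤ r) (hr1 : r < 1) (hγ : 2 < γ) {u : ℝ} (hu : 0 ≤ u) :
    fTQSG r γ u⁻¹ ≤ (1 - r) * (exp (-u) + u * exp (-u)) := by
  obtain ⟨hρ0, hρa⟩ := two_mul_one_sub_div_mul_inv_mem_Ioo hr1 hγ u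
  rw [fTQSG_inv_eq, log_Upsilon hρ0 (by linarith)]
  have hH := binEntropy_nonneg hρ0.le (by linarith)
  have hL : log (1 + exp (-u)) ≤ exp (-u) := by
    linarith [log_le_sub_one_of_pos (show 0 < 1 + exp (-u) by positivity)]
  have hs : (1 + exp u)⁻¹ ≤ exp (-u) := by
    rw [exp_neg]; exact inv_anti₀ (exp_pos u) (by linarith)
  have := mul_le_mul_of_nonneg_left hs hu
  have := mul_le_mul_of_nonneg_left (add_le_add hL this) (sub_nonneg.2 hr1.le)
  linarith

theorem fTQSG_pos {r γ : ℝ} (hr0 : 0 ≤ r) (hr1 : r < 1) (hγ : 2 < γ) {T : ℝ} (hT : 0 < T)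
    (hT₀ : T < (1 - r) * (1 - 2 / γ)) : 0 < fTQSG r γ T := by
  have hgap : 1 < (1 - r) * (1 - 2 / γ) * T⁻¹ := by
    rw [← div_eq_mul_inv, one_lt_div hT]; exact hT₀
  have := fTQSG_inv_ge hr0 hr1 hγ T⁻¹
  rw [inv_inv] at this
  exact lt_of_lt_of_le (mul_pos (by positivity) (by linarith)) this

theorem tendsto_fTQSG_nhdsGT_zero {r γ : ℝ} (hr0 : 0 ≤ r) (hr1 : r < 1) (hγ : 2 < γ) :
    Tendsto (fTQSG r γ) (𝓝[>] 0) (𝓝 0) := by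
  have hgap : 0 < (1 - r) * (1 - 2 / γ) :=
    mul_pos (by linarith) (by rw [sub_pos, div_lt_one (by linarith)]; exact hγ)
  have hbound : Tendsto (fun u => (1 - r) * (exp (-u) + u * exp (-u))) atTop (𝓝 0) := by
    simpa using (tendsto_exp_neg_atTop_nhds_zero.add
      (tendsto_pow_mul_exp_neg_atTop_nhds_zero 1)).const_mul (1 - r)
  refine tendsto_of_tendsto_of_tendsto_of_le_of_le' tendsto_const_nhds
    (hbound.comp tendsto_inv_nhdsGT_zero) ?_ ?_
  · filter_upwards [Ioo_mem_nhdsGT hgap] with T hT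
    exact (fTQSG_pos hr0 hr1 hγ hT.1 hT.2).le
  · filter_upwards [self_mem_nhdsWithin] with T (hT : 0 < T)
    simpa using fTQSG_inv_le hr0 hr1 hγ (inv_nonneg.2 hT.le)

/-- for `r = 1/421` and `γ = 3`, `f(T) > 0` for all sufficiently
small `T > 0`, and `f(T) → 0` as `T → 0⁺`. -/
theorem stmt17 :
    (∃ T₀ : ℝ, 0 < T₀ ∧ ∀ T : ℝ, 0 < T → T < T₀ → 0 < fTQSG (1/421) 3 T)
    ∧ Filter.Tendsto (fTQSG (1/421) 3) (nhdsWithin 0 (Set.Ioi 0)) (nhds 0) := by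
  have hr0 : (0 : ℝ) ≤ 1 / 421 := by norm_num
  have hr1 : (1 / 421 : ℝ) < 1 := by norm_num
  have hγ : (2 : ℝ) < 3 := by norm_num
  exact ⟨⟨_, by norm_num, fun _ hT hT₀ => fTQSG_pos hr0 hr1 hγ hT hT₀⟩,
    tendsto_fTQSG_nhdsGT_zero hr0 hr1 hγ⟩
end
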